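/- arXiv:1902.05551 — 2 statements merged into one kernel-verified Lean document; each statement's English description precedes it below -/
import Mathlib

section
/- Policy improvement with general entropy: if π' maximizes over the policy class Π the objective E_{a∼π'(s,·)}[Q^π(s,a)] + α H(π'(s,·)) in every state s (in particular achieving at least the value attained by π itself), then Q^{π'}(s,a) ≥ Q^π(s,a) for all states s and actions a. -/
open MeasureTheory

/-- Policy improvement with a general entropy measure: if the value functions of
`π` and `π'` satisfy the entropy-augmented Bellman equations, and `π'` attains at
least the improvement-objective value of `π` in every state, i.e.
`∫ Qπ(s,·) dπ'(s) + α H'(s) ≥ ∫ Qπ(s,·) dπ(s) + α H(s) = Vπ(s)`,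
then `Qπ'(s,a) ≥ Qπ(s,a)` for all states `s` and actions `a`. -/
theorem general_entropy_policy_improvement
    {S A : Type*} [MeasurableSpace S] [MeasurableSpace A]
    (P : S → A → Measure S) (hP : ∀ s a, IsProbabilityMeasure (P s a))
    (π π' : S → Measure A)
    (hπ : ∀ s, IsProbabilityMeasure (π s)) (hπ' : ∀ s, IsProbabilityMeasure (π' s))
    (r : S → A → ℝ) (Hπ Hπ' : S → ℝ)   -- entropy of π(s,·) and of π'(s,·)
    (α γ : ℝ) (hα : 0 ≤ α) (hγ0 : 0 ≤ γ) (hγ1 : γ < 1)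
    (Q Q' : S → A → ℝ) (V V' : S → ℝ)
    (C : ℝ) (hQb : ∀ s a, |Q s a| ≤ C) (hQ'b : ∀ s a, |Q' s a| ≤ C)
    (hVdef : ∀ s, V s = (∫ a, Q s a ∂(π s)) + α * Hπ s)
    (hV'def : ∀ s, V' s = (∫ a, Q' s a ∂(π' s)) + α * Hπ' s)
    (hBell : ∀ s a, Q s a = r s a + γ * ∫ s', V s' ∂(P s a))
    (hBell' : ∀ s a, Q' s a = r s a + γ * ∫ s', V' s' ∂(P s a))
    (hQint : ∀ s, Integrable (fun a => Q s a) (π s))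
    (hQint' : ∀ s, Integrable (fun a => Q s a) (π' s))
    (hQ'int : ∀ s, Integrable (fun a => Q' s a) (π' s))
    (hVint : ∀ s a, Integrable V (P s a))
    (hV'int : ∀ s a, Integrable V' (P s a))
    (himp : ∀ s, (∫ a, Q s a ∂(π' s)) + α * Hπ' s ≥ V s) :
    ∀ s a, Q' s a ≥ Q s a := by
  intro s a
  have hC : 0 ≤ C := (abs_nonneg _).trans (hQb s a)
  have key : ∀ n : ℕ, ∀ s a, Q s a - Q' s a ≤ γ ^ n * (2 * C) := by
    intro n
    induction n with
    | zero =>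
      intro s a
      have h1 := (abs_le.1 (hQb s a)).2
      have h2 := (abs_le.1 (hQ'b s a)).1
      simp only [pow_zero, one_mul]
      linarith
    | succ n ih =>
      intro s a
      have hV : ∀ s', V s' - V' s' ≤ γ ^ n * (2 * C) := by
        intro s'
        have h1 : V s' ≤ (∫ a, Q s' a ∂(π' s')) + α * Hπ' s' := himp s'
        have h2 : (∫ a, Q s' a ∂(π' s')) - (∫ a, Q' s' a ∂(π' s')) ≤ γ ^ n * (2 * C) := by
          haveI := hπ' s'
          rw [← integral_sub (hQint' s') (hQ'int s')]
          calc ∫ a, (Q s' a - Q' s' a) ∂(π' s')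
              ≤ ∫ _a, γ ^ n * (2 * C) ∂(π' s') :=
                integral_mono ((hQint' s').sub (hQ'int s')) (integrable_const _)
                  (fun a => ih s' a)
            _ = γ ^ n * (2 * C) := by simp
        rw [hV'def s']
        linarith
      have hI : (∫ s', V s' ∂(P s a)) - (∫ s', V' s' ∂(P s a)) ≤ γ ^ n * (2 * C) := by
        haveI := hP s a
        rw [← integral_sub (hVint s a) (hV'int s a)]
        calc ∫ s', (V s' - V' s') ∂(P s a)
            ≤ ∫ _s', γ ^ n * (2 * C) ∂(P s a) :=
              integral_mono ((hVint s a).sub (hV'int s a)) (integrable_const _)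
                (fun s' => hV s')
          _ = γ ^ n * (2 * C) := by simp
      have hmul : γ * ((∫ s', V s' ∂(P s a)) - (∫ s', V' s' ∂(P s a))) ≤ γ * (γ ^ n * (2 * C)) :=
        mul_le_mul_of_nonneg_left hI hγ0
      rw [hBell s a, hBell' s a]
      ring_nf
      ring_nf at hmul
      linarith
  have hlim : Filter.Tendsto (fun n : ℕ => γ ^ n * (2 * C)) Filter.atTop (nhds 0) := by
    have h := tendsto_pow_atTop_nhds_zero_of_lt_one hγ0 hγ1
    simpa using h.mul_const (2 * C)
  have hle : Q s a - Q' s a ≤ 0 := ge_of_tendsto' hlim (fun n => key n s a)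
  linarith
end

section
/- Performance gap per improvement step: under assumptions on a bell-shaped Q-function with peak ζ_s ≤ ζ* and width ξ_s ∈ [ξ*, ξ^*], if the maximum-entropy-improved Gaussian policy π has mean ā_s and standard deviation σ_{π,s} ≤ σ̄ for some bound σ̄, then max_a Q(s,a) − E_{a∼π(s,·)} Q(s,a) ≤ ζ* (1 − ξ_s / √(ξ_s² + σ̄²)). -/
open Real MeasureTheory

/-- Performance gap per improvement step: for a bell-shaped Q-function
`Q(s,a) = ζ_s exp(−(a−ā_s)²/(2ξ_s²))` with peak `ζ_s ≤ ζ*` and a Gaussian policy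
with the same mean `ā_s` and standard deviation `σ ≤ σ̄`,
`max_a Q(s,a) − E_{a∼π(s,·)} Q(s,a) ≤ ζ* (1 − ξ_s / √(ξ_s² + σ̄²))`. -/
theorem bell_Q_suboptimality_gap (ζs ζstar ξs σ σbar abar : ℝ)
    (hζs : 0 < ζs) (hζ : ζs ≤ ζstar) (hξ : 0 < ξs)
    (hσ0 : 0 < σ) (hσ : σ ≤ σbar) :
    (⨆ a : ℝ, ζs * Real.exp (-(a - abar) ^ 2 / (2 * ξs ^ 2))) -
      ∫ a : ℝ, (1 / (Real.sqrt (2 * π) * σ)) * Real.exp (-(a - abar) ^ 2 / (2 * σ ^ 2)) *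
        (ζs * Real.exp (-(a - abar) ^ 2 / (2 * ξs ^ 2))) ≤
      ζstar * (1 - ξs / Real.sqrt (ξs ^ 2 + σbar ^ 2)) := by
  have hσb : 0 < σbar := lt_of_lt_of_le hσ0 hσ
  have hζst : 0 < ζstar := lt_of_lt_of_le hζs hζ
  set b : ℝ := (ξs ^ 2 + σ ^ 2) / (2 * σ ^ 2 * ξs ^ 2) with hb
  have hbpos : 0 < b := by positivity
  have hS : 0 < Real.sqrt (ξs ^ 2 + σ ^ 2) := Real.sqrt_pos.2 (by positivity)
  have hS2 : Real.sqrt (ξs ^ 2 + σ ^ 2) ^ 2 = ξs ^ 2 + σ ^ 2 :=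
    Real.sq_sqrt (by positivity)
  have h2π : Real.sqrt (2 * π) ^ 2 = 2 * π := Real.sq_sqrt (by positivity)
  have h2πpos : 0 < Real.sqrt (2 * π) := Real.sqrt_pos.2 (by positivity)
  -- supremum equals ζs
  have hsup : (⨆ a : ℝ, ζs * Real.exp (-(a - abar) ^ 2 / (2 * ξs ^ 2))) = ζs := by
    apply le_antisymm
    · apply ciSup_le
      intro a
      have : Real.exp (-(a - abar) ^ 2 / (2 * ξs ^ 2)) ≤ 1 := by
        rw [Real.exp_le_one_iff, neg_div]
        have : 0 ≤ (a - abar) ^ 2 / (2 * ξs ^ 2) := by positivity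
        linarith
      nlinarith
    · have : ζs * Real.exp (-(abar - abar) ^ 2 / (2 * ξs ^ 2)) = ζs := by
        simp
      calc ζs = ζs * Real.exp (-(abar - abar) ^ 2 / (2 * ξs ^ 2)) := this.symm
        _ ≤ _ := by
          apply le_ciSup (f := fun a => ζs * Real.exp (-(a - abar) ^ 2 / (2 * ξs ^ 2)))
          refine ⟨ζs, ?_⟩
          rintro x ⟨a, rfl⟩
          have : Real.exp (-(a - abar) ^ 2 / (2 * ξs ^ 2)) ≤ 1 := by
            rw [Real.exp_le_one_iff, neg_div]
            have : 0 ≤ (a - abar) ^ 2 / (2 * ξs ^ 2) := by positivity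
            linarith
          nlinarith
  -- integral computation
  have hint : (∫ a : ℝ, (1 / (Real.sqrt (2 * π) * σ)) * Real.exp (-(a - abar) ^ 2 / (2 * σ ^ 2)) *
        (ζs * Real.exp (-(a - abar) ^ 2 / (2 * ξs ^ 2))))
      = ζs * ξs / Real.sqrt (ξs ^ 2 + σ ^ 2) := by
    have heq : ∀ a : ℝ, (1 / (Real.sqrt (2 * π) * σ)) * Real.exp (-(a - abar) ^ 2 / (2 * σ ^ 2)) *
        (ζs * Real.exp (-(a - abar) ^ 2 / (2 * ξs ^ 2)))
        = (ζs / (Real.sqrt (2 * π) * σ)) * Real.exp (-b * (a - abar) ^ 2) := by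
      intro a
      rw [mul_assoc, mul_comm (Real.exp _), mul_assoc, ← Real.exp_add]
      have : -(a - abar) ^ 2 / (2 * ξs ^ 2) + -(a - abar) ^ 2 / (2 * σ ^ 2) = -b * (a - abar) ^ 2 := by
        rw [hb]; field_simp; ring
      rw [this]; ring
    simp_rw [heq]
    rw [MeasureTheory.integral_const_mul]
    have hshift : (∫ a : ℝ, Real.exp (-b * (a - abar) ^ 2)) = ∫ x : ℝ, Real.exp (-b * x ^ 2) :=
      MeasureTheory.integral_sub_right_eq_self (fun x => Real.exp (-b * x ^ 2)) abar
    rw [hshift, integral_gaussian]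
    have hval : Real.sqrt (π / b) = Real.sqrt (2 * π) * σ * ξs / Real.sqrt (ξs ^ 2 + σ ^ 2) := by
      have h1 : π / b = (Real.sqrt (2 * π) * σ * ξs / Real.sqrt (ξs ^ 2 + σ ^ 2)) ^ 2 := by
        rw [div_pow, mul_pow, mul_pow, h2π, hS2, hb]
        field_simp
      rw [h1, Real.sqrt_sq (by positivity)]
    rw [hval]
    field_simp
  rw [hsup, hint]
  -- final inequality
  have hmono : ξs / Real.sqrt (ξs ^ 2 + σbar ^ 2) ≤ ξs / Real.sqrt (ξs ^ 2 + σ ^ 2) := by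
    apply div_le_div_of_nonneg_left hξ.le hS
    apply Real.sqrt_le_sqrt
    nlinarith
  have hle1 : ξs / Real.sqrt (ξs ^ 2 + σ ^ 2) ≤ 1 := by
    rw [div_le_one hS]
    rw [show ξs = Real.sqrt (ξs ^ 2) by rw [Real.sqrt_sq hξ.le]]
    exact Real.sqrt_le_sqrt (by nlinarith [Real.sq_sqrt (sq_nonneg ξs)])
  have h0 : 0 ≤ ξs / Real.sqrt (ξs ^ 2 + σbar ^ 2) := by positivity
  calc ζs - ζs * ξs / Real.sqrt (ξs ^ 2 + σ ^ 2)
      = ζs * (1 - ξs / Real.sqrt (ξs ^ 2 + σ ^ 2)) := by ring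
    _ ≤ ζs * (1 - ξs / Real.sqrt (ξs ^ 2 + σbar ^ 2)) := by nlinarith
    _ ≤ ζstar * (1 - ξs / Real.sqrt (ξs ^ 2 + σbar ^ 2)) := by nlinarith
end
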